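/- Let A be an associative unital ℚ(q)-algebra and let x, w ∈ A satisfy w x = q²·x w. Then for every m ∈ ℕ and every t ∈ ℤ: (x + (q − q^{−1})² w ; t choose m) = Σ_{r=0}^{m} q^{r(t−m)} (q − q^{−1})^r · {x; t choose m, r} · w^{(r)}. (Lemma 1.6, formula (c-1).) -/

import Mathlib

noncomputable section

open Finset

/-- The field `ℚ(q)` of rational functions over `ℚ`. -/
abbrev 𝕂 : Type := RatFunc ℚ

/-- The indeterminate `q`. -/
def q : 𝕂 := RatFunc.X

/-- `(n)_q = 1 + q + ⋯ + q^(n-1)`. -/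
def qNum (n : ℕ) : 𝕂 := ∑ i ∈ range n, q ^ i

/-- `(n)_q! = ∏_{r=1}^n (r)_q`. -/
def qNumFac (n : ℕ) : 𝕂 := ∏ r ∈ range n, qNum (r + 1)

/-- `(n choose s)_q = (n)_q! / ((s)_q! (n-s)_q!)`. -/
def qNumBinom (n s : ℕ) : 𝕂 := qNumFac n / (qNumFac s * qNumFac (n - s))

/-- `[n]_q = (q^n - q^(-n))/(q - q⁻¹)`. -/
def qInt (n : ℕ) : 𝕂 := (q ^ n - q⁻¹ ^ n) / (q - q⁻¹)

/-- `[n]_q! = ∏_{r=1}^n [r]_q`. -/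
def qIntFac (n : ℕ) : 𝕂 := ∏ r ∈ range n, qInt (r + 1)

/-- `[n choose s]_q = [n]_q! / ([s]_q! [n-s]_q!)`. -/
def qIntBinom (n s : ℕ) : 𝕂 := qIntFac n / (qIntFac s * qIntFac (n - s))

variable {A : Type*} [Ring A] [Algebra 𝕂 A]

/-- The `q`-divided power `X^(n) = X^n / [n]_q!`. -/
def qDiv (X : A) (n : ℕ) : A := (qIntFac n)⁻¹ • X ^ n

/-- The `q`-binomial coefficient `(X ; c choose n) = ∏_{s=1}^n (q^(c+1-s) X - 1)/(q^s - 1)`. -/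
def qBin (X : A) (c : ℤ) (n : ℕ) : A :=
  (∏ s ∈ range n, (q ^ (s + 1) - 1))⁻¹ •
    ((List.range n).map (fun i => (q ^ (c - (i : ℤ)) : 𝕂) • X - 1)).prod

/-- `{X ; c choose n , r} = ∑_{s=0}^r q^(binom(s+1,2)) (r choose s)_q (X ; c+s choose n-r)`. -/
def qBrace (X : A) (c : ℤ) (n r : ℕ) : A :=
  ∑ s ∈ range (r + 1),
    (q ^ ((s + 1).choose 2) * qNumBinom r s : 𝕂) • qBin X (c + s) (n - r)

/-!
Write `E` for the shift `c ↦ c + 1` on `ℤ`-indexed sequences. By the `q`-binomial theorem,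
`{x; c choose d + r, r}` is `∏_{j=1}^r (1 + q^j E)` applied to the sequence `c ↦ (x; c choose d)`.
The two product recursions of `(x; c choose d + 1)` show that `E - q^(d+1)` maps it to
`(x; c choose d)` and `E - 1` maps it to `q^(c-d) x (x; c choose d)`. With these, the three-term
recursion of the braces in `d` and `r` becomes an identity between polynomials in `E`.

For the lemma itself, induct on `m`: multiply the right-hand side for `m` by the new factor
`q^(t-m) (x + (q - q⁻¹)² w) - 1`, and move `x` and `w` to the left of `w^(r)` using
`w^(r) x = q^(2r) x w^(r)` and `w^(r) w = [r+1] w^(r+1)`. Comparing coefficients of `w^(r)`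
gives exactly the brace recursion.
-/

lemma q_ne_zero : q ≠ 0 := RatFunc.X_ne_zero

lemma q_pow_succ_sub_one_ne_zero (n : ℕ) : q ^ (n + 1) - 1 ≠ 0 := by
  have hpoly : (Polynomial.X ^ (n + 1) - 1 : Polynomial ℚ) ≠ 0 := by
    simpa using Polynomial.X_pow_sub_C_ne_zero n.succ_pos (1 : ℚ)
  simpa [q, ← RatFunc.algebraMap_X] using
    (map_ne_zero_iff _ (RatFunc.algebraMap_injective ℚ)).2 hpoly

lemma q_sub_q_inv_ne_zero : q - q⁻¹ ≠ 0 := by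
  have h := q_pow_succ_sub_one_ne_zero 1
  contrapose! h
  rw [sub_eq_zero] at h ⊢
  rw [pow_two]
  nth_rw 2 [h]
  exact mul_inv_cancel₀ q_ne_zero

lemma qInt_succ_ne_zero (n : ℕ) : qInt (n + 1) ≠ 0 := by
  refine div_ne_zero ?_ q_sub_q_inv_ne_zero
  have h := q_pow_succ_sub_one_ne_zero (2 * n + 1)
  contrapose! h
  rw [sub_eq_zero, inv_pow] at h
  rw [show 2 * n + 1 + 1 = (n + 1) + (n + 1) by ring, pow_add]
  nth_rw 2 [h]
  rw [mul_inv_cancel₀ (pow_ne_zero _ q_ne_zero), sub_self]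

lemma qNumFac_ne_zero (n : ℕ) : qNumFac n ≠ 0 := by
  refine prod_ne_zero_iff.2 fun i _ h => q_pow_succ_sub_one_ne_zero i ?_
  rw [← geom_sum_mul, ← qNum, h, zero_mul]

lemma qIntFac_succ (n : ℕ) : qIntFac (n + 1) = qIntFac n * qInt (n + 1) :=
  prod_range_succ _ n

lemma qNumBinom_zero_right (n : ℕ) : qNumBinom n 0 = 1 := by
  rw [qNumBinom, Nat.sub_zero, show qNumFac 0 = 1 from rfl, one_mul,
    div_self (qNumFac_ne_zero n)]

lemma qNumBinom_self (n : ℕ) : qNumBinom n n = 1 := by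
  rw [qNumBinom, Nat.sub_self, show qNumFac 0 = 1 from rfl, mul_one,
    div_self (qNumFac_ne_zero n)]

lemma qNum_add (a b : ℕ) : qNum (a + b) = qNum a + q ^ a * qNum b := by
  simp only [qNum, sum_range_add, mul_sum, pow_add]

lemma qNumBinom_succ_succ {r s : ℕ} (h : s < r) :
    qNumBinom (r + 1) (s + 1) = qNumBinom r (s + 1) + q ^ (r - s) * qNumBinom r s := by
  obtain ⟨k, rfl⟩ := Nat.exists_eq_add_of_lt h
  have hfac (n : ℕ) : qNumFac (n + 1) = qNumFac n * qNum (n + 1) := prod_range_succ _ n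
  have hN : qNum (s + k + 1 + 1) = qNum (k + 1) + q ^ (k + 1) * qNum (s + 1) := by
    rw [← qNum_add]; ring_nf
  have hNk : qNum (k + 1) ≠ 0 := fun h0 => qNumFac_ne_zero (k + 1) (by rw [hfac, h0, mul_zero])
  have hNs : qNum (s + 1) ≠ 0 := fun h0 => qNumFac_ne_zero (s + 1) (by rw [hfac, h0, mul_zero])
  have hFk := qNumFac_ne_zero k
  have hFs := qNumFac_ne_zero s
  simp only [qNumBinom, show s + k + 1 + 1 - (s + 1) = k + 1 by omega,
    show s + k + 1 - (s + 1) = k by omega, show s + k + 1 - s = k + 1 by omega]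
  rw [hfac (s + k + 1), hfac s, hfac k, hN]
  field_simp

-- `qBin` coerces `List.range n` into `List ℤ` through the list monad; this removes the coercion.
lemma qBin_eq (x : A) (c : ℤ) (n : ℕ) :
    qBin x c n = (∏ s ∈ range n, (q ^ (s + 1) - 1))⁻¹ •
      ((List.range n).map fun i : ℕ => (q ^ (c - i) : 𝕂) • x - 1).prod := by
  simp [qBin, ← List.map_eq_flatMap, List.map_map, Function.comp_def]

lemma qBin_zero (x : A) (c : ℤ) : qBin x c 0 = 1 := by
  simp [qBin_eq]

lemma commute_qBin (x : A) (c : ℤ) (n : ℕ) : Commute x (qBin x c n) := by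
  rw [qBin_eq]
  refine .smul_right (.list_prod_right _ _ fun y hy => ?_) _
  obtain ⟨i, -, rfl⟩ := List.mem_map.1 hy
  exact ((Commute.refl x).smul_right _).sub_right (.one_right x)

lemma qBin_succ_right (x : A) (c : ℤ) (n : ℕ) :
    (q ^ (n + 1) - 1) • qBin x c (n + 1) = qBin x c n * ((q ^ (c - n) : 𝕂) • x - 1) := by
  rw [qBin_eq, qBin_eq, List.range_succ, List.map_append, List.prod_append, prod_range_succ,
    mul_inv, smul_smul, mul_comm, mul_assoc, inv_mul_cancel₀ (q_pow_succ_sub_one_ne_zero n),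
    mul_one, smul_mul_assoc]
  simp

lemma qBin_succ_left (x : A) (c : ℤ) (n : ℕ) :
    (q ^ (n + 1) - 1) • qBin x (c + 1) (n + 1) = ((q ^ (c + 1) : 𝕂) • x - 1) * qBin x c n := by
  rw [qBin_eq, qBin_eq, List.range_succ_eq_map, List.map_cons, List.prod_cons, List.map_map,
    prod_range_succ, mul_inv, smul_smul, mul_comm, mul_assoc,
    inv_mul_cancel₀ (q_pow_succ_sub_one_ne_zero n), mul_one, mul_smul_comm]
  congr 3
  · simp
  · congr 1
    funext i
    simp only [Function.comp_apply, Nat.cast_succ, add_sub_add_right_eq_sub]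

lemma qBin_succ_sub_qBin (x : A) (c : ℤ) (d : ℕ) :
    qBin x (c + 1) (d + 1) - qBin x c (d + 1) = (q ^ (c - d) : 𝕂) • (x * qBin x c d) := by
  refine smul_right_injective A (q_pow_succ_sub_one_ne_zero d) ?_
  have hq : (q : 𝕂) ^ (c + 1) = q ^ (c - d) * q ^ (d + 1) := by
    rw [← zpow_natCast, ← zpow_add₀ q_ne_zero]; push_cast; ring_nf
  dsimp only
  rw [smul_sub, qBin_succ_left, qBin_succ_right, hq]
  simp only [sub_mul, mul_sub, one_mul, mul_one, smul_mul_assoc, mul_smul_comm,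
    (commute_qBin x c d).eq]
  rw [sub_sub_sub_cancel_right, ← sub_smul, smul_smul]
  congr 1
  ring

lemma qBin_succ_sub_smul_qBin (x : A) (c : ℤ) (d : ℕ) :
    qBin x (c + 1) (d + 1) - (q ^ (d + 1) : 𝕂) • qBin x c (d + 1) = qBin x c d := by
  refine smul_right_injective A (q_pow_succ_sub_one_ne_zero d) ?_
  have hq : (q : 𝕂) ^ (c + 1) = q ^ (d + 1) * q ^ (c - d) := by
    rw [← zpow_natCast, ← zpow_add₀ q_ne_zero]; push_cast; ring_nf
  dsimp only
  rw [smul_sub, smul_comm _ (q ^ (d + 1) : 𝕂), qBin_succ_left, qBin_succ_right, hq]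
  simp only [sub_mul, mul_sub, one_mul, mul_one, smul_mul_assoc, mul_smul_comm,
    (commute_qBin x c d).eq, smul_sub, smul_smul]
  rw [sub_sub_sub_cancel_left, sub_smul, one_smul]

lemma sum_range_succ_eq_of_pascal {M : Type*} [AddCommMonoid M] {f g h : ℕ → M} {n : ℕ}
    (h₀ : f 0 = g 0) (hsucc : ∀ s < n, f (s + 1) = g (s + 1) + h s) (hn : f (n + 1) = h n) :
    ∑ s ∈ range (n + 2), f s = ∑ s ∈ range (n + 1), g s + ∑ s ∈ range (n + 1), h s := by
  rw [sum_range_succ', sum_range_succ, sum_range_succ' g, sum_range_succ h, h₀, hn,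
    sum_congr rfl fun s hs => hsucc s (mem_range.1 hs), sum_add_distrib]
  abel

lemma choose_two_succ (s : ℕ) : (s + 1).choose 2 = s.choose 2 + s := by
  rw [Nat.choose_succ_succ', Nat.choose_one_right, add_comm]

section

open Polynomial

def qPoch (a : 𝕂) (r : ℕ) : 𝕂[X] := ∏ j ∈ range r, (1 + C (a * q ^ j) * X)

theorem qPoch_eq_sum (a : 𝕂) (r : ℕ) :
    qPoch a r = ∑ s ∈ range (r + 1), C (a ^ s * q ^ s.choose 2 * qNumBinom r s) * X ^ s := by
  induction r with
  | zero => simp [qPoch, qNumBinom_zero_right]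
  | succ r ih =>
    rw [qPoch, prod_range_succ, ← qPoch, ih, sum_mul]
    simp_rw [mul_add, mul_one, sum_add_distrib]
    symm
    refine sum_range_succ_eq_of_pascal ?_ ?_ ?_
    · simp [qNumBinom_zero_right]
    · intro s hs
      obtain ⟨k, rfl⟩ := Nat.exists_eq_add_of_lt hs
      rw [qNumBinom_succ_succ hs, show s + k + 1 - s = k + 1 by omega, choose_two_succ]
      simp only [map_mul, map_add, map_pow]
      ring
    · rw [qNumBinom_self, qNumBinom_self, choose_two_succ]
      simp only [map_mul, map_pow, map_one]
      ring

def shiftEnd (M : Type*) [AddCommGroup M] [Module 𝕂 M] : Module.End 𝕂 (ℤ → M) :=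
  LinearMap.funLeft 𝕂 M (· + 1)

lemma shiftEnd_pow_apply {M : Type*} [AddCommGroup M] [Module 𝕂 M] (s : ℕ) (g : ℤ → M)
    (c : ℤ) : (shiftEnd M ^ s) g c = g (c + s) := by
  induction s generalizing c with
  | zero => simp
  | succ s ih =>
    rw [pow_succ', Module.End.mul_apply]
    change (shiftEnd M ^ s) g (c + 1) = _
    rw [ih]
    push_cast
    ring_nf

lemma aeval_shiftEnd_sum_apply {M : Type*} [AddCommGroup M] [Module 𝕂 M] (b : ℕ → 𝕂)
    (n : ℕ) (g : ℤ → M) (c : ℤ) :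
    aeval (shiftEnd M) (∑ s ∈ range n, C (b s) * X ^ s) g c =
      ∑ s ∈ range n, b s • g (c + s) := by
  simp [map_sum, Finset.sum_apply, LinearMap.sum_apply, shiftEnd_pow_apply]

def qBinSeq (x : A) (d : ℕ) : ℤ → A := fun c => qBin x c d

lemma qBrace_eq_aeval (x : A) (c : ℤ) (d r : ℕ) :
    qBrace x c (d + r) r = aeval (shiftEnd A) (qPoch q r) (qBinSeq x d) c := by
  rw [qPoch_eq_sum, aeval_shiftEnd_sum_apply, qBrace, Nat.add_sub_cancel]
  refine sum_congr rfl fun s _ => ?_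
  rw [choose_two_succ, pow_add, mul_comm (q ^ s)]
  rfl

lemma aeval_X_sub_C_qBinSeq (x : A) (d : ℕ) :
    aeval (shiftEnd A) (X - C (q ^ (d + 1))) (qBinSeq x (d + 1)) = qBinSeq x d := by
  funext c
  simp only [map_sub, aeval_X, aeval_C, LinearMap.sub_apply, Module.algebraMap_end_apply]
  exact qBin_succ_sub_smul_qBin x c d

lemma smul_mul_qBrace_eq_aeval (x : A) (c : ℤ) (d r : ℕ) :
    (q ^ (c - d) : 𝕂) • (x * qBrace x c (d + r) r) =
      aeval (shiftEnd A) (qPoch 1 r * (X - 1)) (qBinSeq x (d + 1)) c := by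
  rw [map_mul, Module.End.mul_apply, qPoch_eq_sum, aeval_shiftEnd_sum_apply]
  simp only [map_sub, aeval_X, map_one, LinearMap.sub_apply, Module.End.one_apply, Pi.sub_apply,
    one_pow, one_mul]
  rw [qBrace, Nat.add_sub_cancel, mul_sum, smul_sum]
  refine sum_congr rfl fun s _ => ?_
  change _ = _ • (qBin x (c + s + 1) (d + 1) - qBin x (c + s) (d + 1))
  rw [qBin_succ_sub_qBin, mul_smul_comm, smul_smul, smul_smul, choose_two_succ, pow_add,
    show c + s - d = (c - d) + s by ring, zpow_add₀ q_ne_zero, zpow_natCast]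
  ring_nf

lemma qPoch_one_succ (r : ℕ) : qPoch 1 (r + 1) = (1 + X) * qPoch q r := by
  simp only [qPoch, prod_range_succ', one_mul, pow_zero, map_one, pow_succ']
  rw [mul_comm]

lemma smul_qPoch_succ_eq (d r : ℕ) :
    (q ^ (d + r + 2) - 1 : 𝕂) • qPoch q (r + 1) =
      (q ^ (2 * (r + 1)) : 𝕂) • (qPoch 1 (r + 1) * (X - 1))
        - (q ^ (r + 1) : 𝕂) • (qPoch q (r + 1) * (X - C (q ^ (d + 1))))
        + (q ^ (2 * (r + 1)) - 1 : 𝕂) • qPoch q r := by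
  rw [qPoch_one_succ, qPoch, prod_range_succ, ← qPoch]
  simp only [smul_eq_C_mul, map_sub, map_mul, map_pow, map_one]
  ring

theorem qBrace_succ_recursion (x : A) (c : ℤ) (d r : ℕ) :
    (q ^ (d + r + 2) - 1 : 𝕂) • qBrace x c (d + 1 + (r + 1)) (r + 1) =
      (q ^ (2 * (r + 1)) : 𝕂) • (q ^ (c - d) : 𝕂) • (x * qBrace x c (d + (r + 1)) (r + 1))
        - (q ^ (r + 1) : 𝕂) • qBrace x c (d + (r + 1)) (r + 1)
        + (q ^ (2 * (r + 1)) - 1 : 𝕂) • qBrace x c (d + 1 + r) r := by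
  have h := congrArg (fun p => aeval (shiftEnd A) p (qBinSeq x (d + 1)) c)
    (smul_qPoch_succ_eq d r)
  simp only [map_add, map_sub, map_smul, LinearMap.add_apply, LinearMap.sub_apply,
    LinearMap.smul_apply, Pi.add_apply, Pi.sub_apply, Pi.smul_apply] at h
  rw [map_mul (aeval (shiftEnd A)) (qPoch q (r + 1)), Module.End.mul_apply,
    aeval_X_sub_C_qBinSeq] at h
  rw [smul_mul_qBrace_eq_aeval, qBrace_eq_aeval, qBrace_eq_aeval, qBrace_eq_aeval]
  exact h

lemma commute_qBrace (x : A) (c : ℤ) (n r : ℕ) : Commute x (qBrace x c n r) :=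
  .sum_right _ _ _ fun _ _ => (commute_qBin x _ _).smul_right _

lemma qBrace_zero_right (x : A) (c : ℤ) (n : ℕ) : qBrace x c n 0 = qBin x c n := by
  simp [qBrace, qNumBinom_zero_right]

lemma qBrace_self (x : A) (c : ℤ) (n : ℕ) : qBrace x c n n = (qPoch q n).eval 1 • 1 := by
  rw [qPoch_eq_sum, eval_finsetSum, sum_smul, qBrace]
  refine sum_congr rfl fun s _ => ?_
  rw [Nat.sub_self, qBin_zero, choose_two_succ, pow_add]
  simp [mul_comm]

lemma qBrace_succ_self (x : A) (c : ℤ) (n : ℕ) :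
    qBrace x c (n + 1) (n + 1) = (1 + q ^ (n + 1)) • qBrace x c n n := by
  rw [qBrace_self, qBrace_self, qPoch, prod_range_succ, ← qPoch, smul_smul]
  simp only [eval_mul, eval_add, eval_one, eval_C, eval_X, mul_one, pow_succ']
  ring_nf

end

lemma qDiv_zero (w : A) : qDiv w 0 = 1 := by
  simp [qDiv, qIntFac]

lemma qDiv_mul_self (w : A) (r : ℕ) : qDiv w r * w = qInt (r + 1) • qDiv w (r + 1) := by
  rw [qDiv, qDiv, smul_mul_assoc, ← pow_succ, smul_smul, qIntFac_succ, mul_inv, mul_left_comm,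
    mul_inv_cancel₀ (qInt_succ_ne_zero r), mul_one]

def expCoeff (t : ℤ) (m r : ℕ) : 𝕂 := q ^ ((r : ℤ) * (t - m)) * (q - q⁻¹) ^ r

lemma expCoeff_eq (t : ℤ) (m r : ℕ) : expCoeff t m r = (q ^ (t - m)) ^ r * (q - q⁻¹) ^ r := by
  rw [expCoeff, mul_comm (r : ℤ), zpow_mul, zpow_natCast]

lemma q_zpow_sub_natCast_succ (t : ℤ) (m : ℕ) :
    (q : 𝕂) ^ (t - (m + 1 : ℕ)) = q ^ (t - m) * q⁻¹ := by
  rw [Nat.cast_succ, ← sub_sub, zpow_sub_one₀ q_ne_zero]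

lemma expCoeff_succ_mul_pow (t : ℤ) (m r : ℕ) :
    expCoeff t (m + 1) r * q ^ r = expCoeff t m r := by
  rw [expCoeff_eq, expCoeff_eq, q_zpow_sub_natCast_succ, mul_pow, inv_pow]
  field_simp [q_ne_zero]

lemma expCoeff_succ_succ_mul (t : ℤ) (m r : ℕ) :
    expCoeff t (m + 1) (r + 1) * (q ^ (2 * (r + 1)) - 1) =
      expCoeff t m r * (q ^ (t - m) * ((q - q⁻¹) ^ 2 * qInt (r + 1))) := by
  rw [expCoeff_eq, expCoeff_eq, q_zpow_sub_natCast_succ, qInt, mul_pow, inv_pow, pow_mul']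
  have hp : (q : 𝕂) ^ (r + 1) ≠ 0 := pow_ne_zero _ q_ne_zero
  have he := q_sub_q_inv_ne_zero
  generalize q ^ (r + 1) = p at hp ⊢
  generalize q - q⁻¹ = e at he ⊢
  field_simp
  ring

lemma expCoeff_zero_right (t : ℤ) (m : ℕ) : expCoeff t m 0 = 1 := by
  simp [expCoeff]

lemma expCoeff_smul_qBrace_succ_succ (x : A) (t : ℤ) {m r : ℕ} (hr : r < m) :
    (q ^ (m + 1) - 1 : 𝕂) • expCoeff t (m + 1) (r + 1) • qBrace x t (m + 1) (r + 1) =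
      expCoeff t m (r + 1) •
          ((q ^ (t - m) * q ^ (2 * (r + 1)) : 𝕂) • (x * qBrace x t m (r + 1))
            - qBrace x t m (r + 1))
        + (expCoeff t m r * (q ^ (t - m) * ((q - q⁻¹) ^ 2 * qInt (r + 1)))) •
          qBrace x t m r := by
  obtain ⟨d, rfl⟩ : ∃ d, m = d + r + 1 := ⟨m - r - 1, by omega⟩
  have hrec := qBrace_succ_recursion x t d r
  rw [show d + 1 + r = d + r + 1 by ring, show d + 1 + (r + 1) = d + r + 1 + 1 by ring,
    show d + r + 2 = d + r + 1 + 1 by ring] at hrec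
  have hq : (q : 𝕂) ^ (t - d) = q ^ (r + 1) * q ^ (t - (d + r + 1 : ℕ)) := by
    rw [← zpow_natCast, ← zpow_add₀ q_ne_zero]; push_cast; ring_nf
  rw [← expCoeff_succ_mul_pow t (d + r + 1) (r + 1), ← expCoeff_succ_succ_mul t (d + r + 1) r,
    smul_comm, hrec, hq]
  simp only [smul_add, smul_sub, smul_smul]
  congr 3
  ring

section

variable {x w : A}

lemma pow_mul_of_mul_eq_smul (hwx : w * x = (q ^ 2 : 𝕂) • (x * w)) (r : ℕ) :
    w ^ r * x = (q ^ (2 * r) : 𝕂) • (x * w ^ r) := by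
  induction r with
  | zero => simp
  | succ r ih =>
    rw [pow_succ, mul_assoc, hwx, mul_smul_comm, ← mul_assoc, ih, smul_mul_assoc, smul_smul,
      mul_assoc, ← pow_succ, ← pow_add, mul_add, mul_one, add_comm]

lemma qDiv_mul_of_mul_eq_smul (hwx : w * x = (q ^ 2 : 𝕂) • (x * w)) (r : ℕ) :
    qDiv w r * x = (q ^ (2 * r) : 𝕂) • (x * qDiv w r) := by
  rw [qDiv, smul_mul_assoc, pow_mul_of_mul_eq_smul hwx, smul_comm, mul_smul_comm]

lemma mul_qDiv_mul_smul_add_sub_one (hwx : w * x = (q ^ 2 : 𝕂) • (x * w)) {B : A}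
    (hB : Commute x B) (α l : 𝕂) (r : ℕ) :
    B * qDiv w r * (α • (x + l • w) - 1) =
      (α * q ^ (2 * r)) • (x * B * qDiv w r) - B * qDiv w r
        + (α * (l * qInt (r + 1))) • (B * qDiv w (r + 1)) := by
  have hx : B * qDiv w r * x = (q ^ (2 * r) : 𝕂) • (x * B * qDiv w r) := by
    rw [mul_assoc, qDiv_mul_of_mul_eq_smul hwx, mul_smul_comm, ← mul_assoc, hB.eq]
  have hw : B * qDiv w r * w = qInt (r + 1) • (B * qDiv w (r + 1)) := by
    rw [mul_assoc, qDiv_mul_self, mul_smul_comm]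
  rw [mul_sub, mul_one, smul_add, mul_add, mul_smul_comm, mul_smul_comm, mul_smul_comm, hx, hw,
    smul_smul, smul_smul, smul_smul, sub_add_eq_add_sub, mul_assoc α l]

def qBraceExpansion (x w : A) (t : ℤ) (m : ℕ) : A :=
  ∑ r ∈ range (m + 1), expCoeff t m r • (qBrace x t m r * qDiv w r)

theorem qBraceExpansion_succ (hwx : w * x = (q ^ 2 : 𝕂) • (x * w)) (t : ℤ) (m : ℕ) :
    (q ^ (m + 1) - 1 : 𝕂) • qBraceExpansion x w t (m + 1) =
      qBraceExpansion x w t m * ((q ^ (t - m) : 𝕂) • (x + ((q - q⁻¹) ^ 2 : 𝕂) • w) - 1) := by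
  rw [qBraceExpansion, qBraceExpansion, smul_sum, sum_mul]
  symm
  rw [sum_congr rfl fun r _ => by rw [smul_mul_assoc, mul_qDiv_mul_smul_add_sub_one hwx
    (commute_qBrace x t m r), smul_add], sum_add_distrib]
  refine (sum_range_succ_eq_of_pascal ?_ (fun r hr => ?_) ?_).symm
  · simp only [expCoeff_zero_right, one_smul, qDiv_zero, mul_one, mul_zero, pow_zero,
      qBrace_zero_right]
    rw [qBin_succ_right, mul_sub, mul_one, mul_smul_comm, (commute_qBin x t m).eq]
  · have h := congrArg (· * qDiv w (r + 1)) (expCoeff_smul_qBrace_succ_succ x t hr)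
    simp only [add_mul, sub_mul, smul_mul_assoc, mul_assoc, smul_smul] at h ⊢
    exact h
  · rw [qBrace_succ_self, smul_mul_assoc, smul_smul, smul_smul, smul_smul,
      ← expCoeff_succ_succ_mul]
    congr 1
    ring

end

/-- **Lemma 1.6 (c-1)**. -/
theorem lemma_1_6_c1 {A : Type*} [Ring A] [Algebra 𝕂 A]
    (x w : A) (hwx : w * x = (q ^ 2 : 𝕂) • (x * w)) (m : ℕ) (t : ℤ) :
    qBin (x + ((q - q⁻¹) ^ 2 : 𝕂) • w) t m =
      ∑ r ∈ range (m + 1),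
        (q ^ ((r : ℤ) * (t - (m : ℤ))) * (q - q⁻¹) ^ r : 𝕂) •
          (qBrace x t m r * qDiv w r) := by
  change _ = qBraceExpansion x w t m
  induction m with
  | zero => simp [qBraceExpansion, expCoeff, qBin_zero, qBrace_zero_right, qDiv_zero]
  | succ m ih =>
    refine smul_right_injective A (q_pow_succ_sub_one_ne_zero m) ?_
    dsimp only
    rw [qBin_succ_right, ih, qBraceExpansion_succ hwx]

end
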